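/- arXiv:1205.0856 — 2 statements merged into one kernel-verified Lean document; each statement's English description precedes it below -/
import Mathlib

section
/- (Dual optimality.) Suppose σ̄ ∈ ℝ^m, τ̄ ∈ ℝⁿ, μ̄ ∈ ℝ^K satisfy σ̄ ≥ 0, μ̄ ≥ 0, and G(μ̄) is positive definite, and set ȳ = G(μ̄)⁻¹ F(σ̄,τ̄,μ̄). If Dȳ ≤ b, Hȳ = e_n, ȳ ∘ (ȳ − e_K) ≤ 0, σ̄ᵀ(Dȳ − b) = 0, and μ̄ᵀ(ȳ ∘ (ȳ − e_K)) = 0, then for every σ ∈ ℝ^m with σ ≥ 0, every τ ∈ ℝⁿ, and every μ ∈ ℝ^K with μ ≥ 0 and G(μ) positive definite, one has P^d(σ,τ,μ) ≤ P^d(σ̄,τ̄,μ̄); that is, (σ̄,τ̄,μ̄) is a global maximizer of P^d over this dual feasible region. -/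
/-!
Weak duality for the Lagrangian `L(y,σ,τ,μ) = P(y) + σᵀ(Dy − b) + τᵀ(Hy − e) + μᵀ(y ∘ (y − e))`
of the primal problem `min P(y) = ½ yᵀBy − hᵀy`. Since `L = ½ yᵀG(μ)y − F(σ,τ,μ)ᵀy − σᵀb − τᵀe`,
completing the square shows that `P^d(σ,τ,μ)` is the minimum of `L(·,σ,τ,μ)` when `G(μ) ≻ 0`,
so `P^d(σ,τ,μ) ≤ L(ȳ,σ,τ,μ) ≤ P(ȳ)` by the feasibility of `ȳ` and the signs of `σ, μ`.
At `(σ̄,τ̄,μ̄)` the minimiser is `ȳ` itself and complementary slackness gives `L(ȳ,σ̄,τ̄,μ̄) = P(ȳ)`.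
-/

open Matrix

section CompletingTheSquare

variable {ι : Type*} [Fintype ι] [DecidableEq ι] {M : Matrix ι ι ℝ}

theorem Matrix.IsHermitian.dotProduct_mulVec_sub_nonsing_inv_mulVec (hM : M.IsHermitian)
    (hdet : IsUnit M.det) (f y : ι → ℝ) :
    (y - M⁻¹ *ᵥ f) ⬝ᵥ M *ᵥ (y - M⁻¹ *ᵥ f)
      = y ⬝ᵥ M *ᵥ y - 2 * (f ⬝ᵥ y) + f ⬝ᵥ M⁻¹ *ᵥ f := by
  set w := M⁻¹ *ᵥ f
  have hMw : M *ᵥ w = f := by rw [mulVec_mulVec, mul_nonsing_inv M hdet, one_mulVec]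
  have hwM : w ⬝ᵥ M *ᵥ y = f ⬝ᵥ y := by
    rw [dotProduct_mulVec, ← mulVec_transpose, (isHermitian_iff_isSymm.mp hM).eq, hMw,
      dotProduct_comm]
  rw [mulVec_sub, dotProduct_sub, sub_dotProduct, sub_dotProduct, hwM, hMw,
    dotProduct_comm y f, dotProduct_comm w f]
  ring

theorem Matrix.PosDef.neg_half_dotProduct_nonsing_inv_mulVec_le (hM : M.PosDef) (f y : ι → ℝ) :
    -(1 / 2) * (f ⬝ᵥ M⁻¹ *ᵥ f) ≤ 1 / 2 * (y ⬝ᵥ M *ᵥ y) - f ⬝ᵥ y := by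
  have hsq := hM.posSemidef.dotProduct_mulVec_nonneg (y - M⁻¹ *ᵥ f)
  rw [star_trivial, hM.isHermitian.dotProduct_mulVec_sub_nonsing_inv_mulVec
    hM.det_pos.ne'.isUnit] at hsq
  linarith

theorem Matrix.neg_half_dotProduct_nonsing_inv_mulVec_eq (hdet : IsUnit M.det) (f : ι → ℝ) :
    -(1 / 2) * (f ⬝ᵥ M⁻¹ *ᵥ f)
      = 1 / 2 * (M⁻¹ *ᵥ f ⬝ᵥ M *ᵥ (M⁻¹ *ᵥ f)) - f ⬝ᵥ M⁻¹ *ᵥ f := by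
  rw [mulVec_mulVec, mul_nonsing_inv M hdet, one_mulVec, dotProduct_comm _ f]
  ring

end CompletingTheSquare

section Lagrangian

variable {κ α β : Type*} [Fintype κ] [Fintype α] [Fintype β]
  (B : Matrix κ κ ℝ) (h : κ → ℝ) (D : Matrix α κ ℝ) (b : α → ℝ) (H : Matrix β κ ℝ)

noncomputable def primalObjective (y : κ → ℝ) : ℝ :=
  1 / 2 * (y ⬝ᵥ B *ᵥ y) - h ⬝ᵥ y

noncomputable def lagrangian (y : κ → ℝ) (σ : α → ℝ) (τ : β → ℝ) (μ : κ → ℝ) : ℝ :=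
  primalObjective B h y + σ ⬝ᵥ (D *ᵥ y - b) + τ ⬝ᵥ (H *ᵥ y - 1) + μ ⬝ᵥ (y * (y - 1))

theorem lagrangian_eq [DecidableEq κ] (y : κ → ℝ) (σ : α → ℝ) (τ : β → ℝ) (μ : κ → ℝ) :
    lagrangian B h D b H y σ τ μ
      = 1 / 2 * (y ⬝ᵥ (B + (2 : ℝ) • diagonal μ) *ᵥ y)
        - (h - Dᵀ *ᵥ σ - Hᵀ *ᵥ τ + μ) ⬝ᵥ y - σ ⬝ᵥ b - τ ⬝ᵥ 1 := by
  have hdiag : y ⬝ᵥ diagonal μ *ᵥ y = μ ⬝ᵥ (y * y) := by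
    simp only [dotProduct, mulVec_diagonal, Pi.mul_apply]
    exact Finset.sum_congr rfl fun i _ => by ring
  simp only [lagrangian, primalObjective, add_mulVec, smul_mulVec, dotProduct_add,
    dotProduct_smul, hdiag, smul_eq_mul, add_dotProduct, sub_dotProduct, dotProduct_sub,
    mulVec_transpose, ← dotProduct_mulVec, mul_sub, mul_one]
  ring

theorem lagrangian_le_primalObjective {y : κ → ℝ} {σ : α → ℝ} {τ : β → ℝ} {μ : κ → ℝ}
    (hσ : 0 ≤ σ) (hμ : 0 ≤ μ) (hD : D *ᵥ y ≤ b) (hH : H *ᵥ y = 1) (hy : y * (y - 1) ≤ 0) :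
    lagrangian B h D b H y σ τ μ ≤ primalObjective B h y := by
  have hσD : σ ⬝ᵥ (D *ᵥ y - b) ≤ 0 := by
    simpa using dotProduct_le_dotProduct_of_nonneg_left (sub_nonpos.mpr hD) hσ
  have hμy : μ ⬝ᵥ (y * (y - 1)) ≤ 0 := by
    simpa using dotProduct_le_dotProduct_of_nonneg_left hy hμ
  rw [lagrangian, hH, sub_self, dotProduct_zero]
  linarith

theorem lagrangian_eq_primalObjective {y : κ → ℝ} {σ : α → ℝ} {τ : β → ℝ} {μ : κ → ℝ}
    (hH : H *ᵥ y = 1) (hσ : σ ⬝ᵥ (D *ᵥ y - b) = 0) (hμ : μ ⬝ᵥ (y * (y - 1)) = 0) :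
    lagrangian B h D b H y σ τ μ = primalObjective B h y := by
  rw [lagrangian, hH, sub_self, dotProduct_zero, hσ, hμ]
  ring

end Lagrangian

theorem stmt8_general
    (n m K : ℕ)
    (B : Matrix (Fin K) (Fin K) ℝ)
    (h : Fin K → ℝ) (D : Matrix (Fin m) (Fin K) ℝ) (b : Fin m → ℝ)
    (H : Matrix (Fin n) (Fin K) ℝ)
    (G : (Fin K → ℝ) → Matrix (Fin K) (Fin K) ℝ)
    (hG : ∀ μ, G μ = B + (2 : ℝ) • Matrix.diagonal μ)
    (F : (Fin m → ℝ) → (Fin n → ℝ) → (Fin K → ℝ) → (Fin K → ℝ))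
    (hF : ∀ σ τ μ, F σ τ μ = h - Dᵀ.mulVec σ - Hᵀ.mulVec τ + μ)
    (Pd : (Fin m → ℝ) → (Fin n → ℝ) → (Fin K → ℝ) → ℝ)
    (hPd : ∀ σ τ μ, Pd σ τ μ
        = -(1 / 2) * ((F σ τ μ) ⬝ᵥ (G μ)⁻¹.mulVec (F σ τ μ))
          - σ ⬝ᵥ b - τ ⬝ᵥ (1 : Fin n → ℝ))
    (σbar : Fin m → ℝ) (τbar : Fin n → ℝ) (μbar : Fin K → ℝ)
    (hpos : (G μbar).PosDef)
    (ybar : Fin K → ℝ)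
    (hybar : ybar = (G μbar)⁻¹.mulVec (F σbar τbar μbar))
    (hfeas1 : D.mulVec ybar ≤ b)
    (hfeas2 : H.mulVec ybar = (1 : Fin n → ℝ))
    (hfeas3 : ybar * (ybar - (1 : Fin K → ℝ)) ≤ 0)
    (hslack1 : σbar ⬝ᵥ (D.mulVec ybar - b) = 0)
    (hslack2 : μbar ⬝ᵥ (ybar * (ybar - (1 : Fin K → ℝ))) = 0) :
    ∀ σ : Fin m → ℝ, 0 ≤ σ → ∀ τ : Fin n → ℝ, ∀ μ : Fin K → ℝ, 0 ≤ μ →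
      (G μ).PosDef → Pd σ τ μ ≤ Pd σbar τbar μbar := by
  intro σ hσ τ μ hμ hposμ
  have hPd_le : Pd σ τ μ ≤ lagrangian B h D b H ybar σ τ μ := by
    rw [hPd, lagrangian_eq, ← hG, ← hF]
    linarith [hposμ.neg_half_dotProduct_nonsing_inv_mulVec_le (F σ τ μ) ybar]
  have hPd_bar : Pd σbar τbar μbar = lagrangian B h D b H ybar σbar τbar μbar := by
    rw [hPd, lagrangian_eq, ← hG, ← hF, hybar,
      neg_half_dotProduct_nonsing_inv_mulVec_eq hpos.det_pos.ne'.isUnit]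
  calc Pd σ τ μ ≤ lagrangian B h D b H ybar σ τ μ := hPd_le
    _ ≤ primalObjective B h ybar :=
      lagrangian_le_primalObjective B h D b H hσ hμ hfeas1 hfeas2 hfeas3
    _ = lagrangian B h D b H ybar σbar τbar μbar :=
      (lagrangian_eq_primalObjective B h D b H hfeas2 hslack1 hslack2).symm
    _ = Pd σbar τbar μbar := hPd_bar.symm

/-- Dual optimality. Under the KKT-type conditions at `(σ̄,τ̄,μ̄)`,
the point `(σ̄,τ̄,μ̄)` is a global maximizer of the canonical dual function `P^d`
over the dual feasible region `{(σ,τ,μ) : σ ≥ 0, μ ≥ 0, G(μ) ≻ 0}`. -/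
theorem stmt8
    (n m K : ℕ) (hn : 0 < n) (hm : 0 < m) (hK : 0 < K)
    (B : Matrix (Fin K) (Fin K) ℝ) (hB : B.IsSymm)
    (h : Fin K → ℝ) (D : Matrix (Fin m) (Fin K) ℝ) (b : Fin m → ℝ)
    (H : Matrix (Fin n) (Fin K) ℝ)
    (G : (Fin K → ℝ) → Matrix (Fin K) (Fin K) ℝ)
    (hG : ∀ μ, G μ = B + (2 : ℝ) • Matrix.diagonal μ)
    (F : (Fin m → ℝ) → (Fin n → ℝ) → (Fin K → ℝ) → (Fin K → ℝ))
    (hF : ∀ σ τ μ, F σ τ μ = h - Dᵀ.mulVec σ - Hᵀ.mulVec τ + μ)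
    (Pd : (Fin m → ℝ) → (Fin n → ℝ) → (Fin K → ℝ) → ℝ)
    (hPd : ∀ σ τ μ, Pd σ τ μ
        = -(1 / 2) * ((F σ τ μ) ⬝ᵥ (G μ)⁻¹.mulVec (F σ τ μ))
          - σ ⬝ᵥ b - τ ⬝ᵥ (1 : Fin n → ℝ))
    (σbar : Fin m → ℝ) (τbar : Fin n → ℝ) (μbar : Fin K → ℝ)
    (hσ : 0 ≤ σbar) (hμ : 0 ≤ μbar)
    (hpos : (G μbar).PosDef)
    (ybar : Fin K → ℝ)
    (hybar : ybar = (G μbar)⁻¹.mulVec (F σbar τbar μbar))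
    (hfeas1 : D.mulVec ybar ≤ b)
    (hfeas2 : H.mulVec ybar = (1 : Fin n → ℝ))
    (hfeas3 : ybar * (ybar - (1 : Fin K → ℝ)) ≤ 0)
    (hslack1 : σbar ⬝ᵥ (D.mulVec ybar - b) = 0)
    (hslack2 : μbar ⬝ᵥ (ybar * (ybar - (1 : Fin K → ℝ))) = 0) :
    ∀ σ : Fin m → ℝ, 0 ≤ σ → ∀ τ : Fin n → ℝ, ∀ μ : Fin K → ℝ, 0 ≤ μ →
      (G μ).PosDef → Pd σ τ μ ≤ Pd σbar τbar μbar :=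
  stmt8_general n m K B h D b H G hG F hF Pd hPd σbar τbar μbar hpos ybar hybar hfeas1 hfeas2 hfeas3
    hslack1 hslack2
end

section
/- (Critical point correspondence for the example.) Let α > 0, λ > 0, and f ∈ ℝⁿ with f ≠ 0, and define Π(x) = ½ α (½‖x‖² − λ)² − fᵀx. Then x ∈ ℝⁿ satisfies the criticality condition α(½‖x‖² − λ)x = f if and only if there exists σ ≠ 0 with (α⁻¹σ + λ)σ² = ½‖f‖² and x = σ⁻¹ f. -/
open scoped RealInnerProductSpace

/-! The criticality condition says `x` is a scalar multiple `σ(x)⁻¹ • f` of `f`, with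
`σ(x) = α(½‖x‖² − λ)`, which cannot vanish because `f ≠ 0`. Substituting `x = σ⁻¹ • f` turns
the fixed-point equation `σ(σ⁻¹ • f) = σ`, i.e. `α(½‖f‖²/σ² − λ) = σ`, into the dual algebraic
equation `(α⁻¹σ + λ)σ² = ½‖f‖²`. -/

lemma norm_inv_smul_sq {E : Type*} [NormedAddCommGroup E] [NormedSpace ℝ E] (σ : ℝ) (f : E) :
    ‖σ⁻¹ • f‖ ^ 2 = ‖f‖ ^ 2 / σ ^ 2 := by
  rw [norm_smul, mul_pow, Real.norm_eq_abs, sq_abs, inv_pow, inv_mul_eq_div]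

lemma mul_half_div_sq_sub_eq_iff {α lam σ t : ℝ} (hα : α ≠ 0) (hσ : σ ≠ 0) :
    α * ((1 / 2) * (t / σ ^ 2) - lam) = σ ↔ (α⁻¹ * σ + lam) * σ ^ 2 = (1 / 2) * t := by
  field_simp
  constructor <;> intro h <;> linarith

lemma mul_half_norm_inv_smul_sq_sub_eq_iff {E : Type*} [NormedAddCommGroup E] [NormedSpace ℝ E]
    {α lam σ : ℝ} (hα : α ≠ 0) (hσ : σ ≠ 0) (f : E) :
    α * ((1 / 2) * ‖σ⁻¹ • f‖ ^ 2 - lam) = σ ↔ (α⁻¹ * σ + lam) * σ ^ 2 = (1 / 2) * ‖f‖ ^ 2 := by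
  rw [norm_inv_smul_sq, mul_half_div_sq_sub_eq_iff hα hσ]

theorem stmt14_general
    (n : ℕ) (α lam : ℝ) (hα : 0 < α)
    (f : EuclideanSpace ℝ (Fin n)) (hf : f ≠ 0)
    (x : EuclideanSpace ℝ (Fin n)) :
    (α * ((1 / 2) * ‖x‖ ^ 2 - lam)) • x = f
      ↔ ∃ σ : ℝ, σ ≠ 0 ∧ (α⁻¹ * σ + lam) * σ ^ 2 = (1 / 2) * ‖f‖ ^ 2
          ∧ x = σ⁻¹ • f := by
  constructor
  · intro hcrit
    have hσ : α * ((1 / 2) * ‖x‖ ^ 2 - lam) ≠ 0 := by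
      rintro h0
      exact hf (by rw [← hcrit, h0, zero_smul])
    have hx : x = (α * ((1 / 2) * ‖x‖ ^ 2 - lam))⁻¹ • f := (eq_inv_smul_iff₀ hσ).2 hcrit
    refine ⟨_, hσ, ?_, hx⟩
    rw [← mul_half_norm_inv_smul_sq_sub_eq_iff hα.ne' hσ, ← hx]
  · rintro ⟨σ, hσ, hdual, rfl⟩
    rw [(mul_half_norm_inv_smul_sq_sub_eq_iff hα.ne' hσ f).2 hdual, smul_inv_smul₀ hσ]

/-- Critical point correspondence for the example: when `f ≠ 0`,
`x` solves the criticality condition `α(½‖x‖² − λ)x = f` iff `x = σ⁻¹f` for some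
`σ ≠ 0` solving the dual algebraic equation `(α⁻¹σ + λ)σ² = ½‖f‖²`. -/
theorem stmt14
    (n : ℕ) (α lam : ℝ) (hα : 0 < α) (hlam : 0 < lam)
    (f : EuclideanSpace ℝ (Fin n)) (hf : f ≠ 0)
    (x : EuclideanSpace ℝ (Fin n)) :
    (α * ((1 / 2) * ‖x‖ ^ 2 - lam)) • x = f
      ↔ ∃ σ : ℝ, σ ≠ 0 ∧ (α⁻¹ * σ + lam) * σ ^ 2 = (1 / 2) * ‖f‖ ^ 2
          ∧ x = σ⁻¹ • f :=
  stmt14_general n α lam hα f hf x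
end
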